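/- arXiv:1602.02371 — 12 statements merged into one kernel-verified Lean document; each statement's English description precedes it below -/
import Mathlib

section
/- Let R be a commutative ring and x, t ∈ R. Let M be the 6×6 matrix with rows (x,0,0,0,0,0), (1,−1,1,0,0,0), (0,0,−x,0,0,0), (0,0,1,−x,1,0), (0,0,0,0,1,0), (0,0,0,0,1,x). Then det(M − t·Mᵀ) = −x⁴·(1−t)⁶ − x²·t·(1−t)⁴ + t³. -/
set_option maxRecDepth 8000
set_option maxHeartbeats 1000000

open Matrix

theorem seifert_matrix_det_Kx (R : Type*) [CommRing R] (x t : R)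
    (M : Matrix (Fin 6) (Fin 6) R)
    (hM : M = !![x, 0, 0, 0, 0, 0;
                 1, -1, 1, 0, 0, 0;
                 0, 0, -x, 0, 0, 0;
                 0, 0, 1, -x, 1, 0;
                 0, 0, 0, 0, 1, 0;
                 0, 0, 0, 0, 1, x]) :
    (M - t • Mᵀ).det = -x^4*(1-t)^6 - x^2*t*(1-t)^4 + t^3 := by
  have hT : Mᵀ = !![x, 1, 0, 0, 0, 0;
                    0, -1, 0, 0, 0, 0;
                    0, 1, -x, 1, 0, 0;
                    0, 0, 0, -x, 0, 0;
                    0, 0, 0, 1, 1, 1;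
                    0, 0, 0, 0, 0, x] := by
    rw [hM]; ext i j; fin_cases i <;> fin_cases j <;> rfl
  have h : M - t • Mᵀ =
      !![x - t*x, -t, 0, 0, 0, 0;
         1, -1 + t, 1, 0, 0, 0;
         0, -t, -x + t*x, -t, 0, 0;
         0, 0, 1, -x + t*x, 1, 0;
         0, 0, 0, -t, 1 - t, -t;
         0, 0, 0, 0, 1, x - t*x] := by
    rw [hT, hM]
    ext i j
    fin_cases i <;> fin_cases j <;>
      simp [Matrix.sub_apply, Matrix.smul_apply, Matrix.vecHead, Matrix.vecTail,
        show ((5:Fin 6)) = Fin.succ 4 from rfl, Matrix.cons_val_succ, Matrix.cons_val_four]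
  rw [h]
  simp [Matrix.det_succ_row_zero, Fin.sum_univ_succ, Fin.succAbove]
  ring
end

section
/- For every real number x, the function Δ(t) = −x⁴·(t⁻³ + t³) + (6x⁴ − x²)·(t⁻² + t²) − (15x⁴ − 4x²)·(t⁻¹ + t) + 20x⁴ − 6x² + 1 on (0,∞) satisfies Δ''(1) = 0, where Δ'' denotes the second derivative. -/
/-- The normalized Alexander polynomial of the two-bridge knot `K_x`
with Conway form `[2x, 2, -2x, 2x, 2, -2x]`. -/
noncomputable def Δ (x t : ℝ) : ℝ :=
  -x^4*(t⁻¹^3 + t^3) + (6*x^4 - x^2)*(t⁻¹^2 + t^2)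
    - (15*x^4 - 4*x^2)*(t⁻¹ + t) + 20*x^4 - 6*x^2 + 1

noncomputable def g (x t : ℝ) : ℝ :=
  -x^4*(-3*t⁻¹^4 + 3*t^2) + (6*x^4 - x^2)*(-2*t⁻¹^3 + 2*t)
    - (15*x^4 - 4*x^2)*(-t⁻¹^2 + 1)

lemma hasDeltaDeriv (x t : ℝ) (ht : t ≠ 0) : HasDerivAt (Δ x) (g x t) t := by
  have hinv := hasDerivAt_inv ht
  have h : HasDerivAt (Δ x)
      (-x^4*((3*t⁻¹^2*(-(t^2)⁻¹)) + 3*t^2) + (6*x^4 - x^2)*((2*t⁻¹^1*(-(t^2)⁻¹)) + 2*t)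
        - (15*x^4 - 4*x^2)*(-(t^2)⁻¹ + 1)) t := by
    unfold Δ
    have h3 : HasDerivAt (fun t : ℝ => t⁻¹^3 + t^3) (3*t⁻¹^2*(-(t^2)⁻¹) + 3*t^2) t := by
      have := (hinv.pow 3).add (hasDerivAt_pow 3 t)
      simpa [Pi.add_def, Pi.pow_def, mul_comm, mul_assoc, mul_left_comm] using this
    have h2 : HasDerivAt (fun t : ℝ => t⁻¹^2 + t^2) (2*t⁻¹^1*(-(t^2)⁻¹) + 2*t) t := by
      have := (hinv.pow 2).add (hasDerivAt_pow 2 t)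
      simpa [Pi.add_def, Pi.pow_def, mul_comm, mul_assoc, mul_left_comm] using this
    have h1 : HasDerivAt (fun t : ℝ => t⁻¹ + t) (-(t^2)⁻¹ + 1) t :=
      hinv.add (hasDerivAt_id t)
    exact (((((h3.const_mul (-x^4)).add (h2.const_mul (6*x^4 - x^2))).sub
      (h1.const_mul (15*x^4 - 4*x^2))).add_const (20*x^4)).sub_const (6*x^2)).add_const 1
  convert h using 1
  unfold g
  field_simp

theorem alexander_second_deriv_at_one (x : ℝ) :
    iteratedDeriv 2 (Δ x) 1 = 0 := by
  rw [iteratedDeriv_succ, iteratedDeriv_one]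
  have hev : deriv (Δ x) =ᶠ[nhds (1:ℝ)] g x := by
    filter_upwards [isOpen_ne.mem_nhds (by norm_num : (1:ℝ) ≠ 0)] with t ht
    exact (hasDeltaDeriv x t ht).deriv
  rw [hev.deriv_eq]
  have hinv := hasDerivAt_inv (one_ne_zero : (1:ℝ) ≠ 0)
  have h : HasDerivAt (g x)
      (-x^4*(-3*(4*(1:ℝ)⁻¹^3*(-(1^2)⁻¹)) + 3*(2*1)) + (6*x^4 - x^2)*(-2*(3*(1:ℝ)⁻¹^2*(-(1^2)⁻¹)) + 2)
        - (15*x^4 - 4*x^2)*(-(2*(1:ℝ)⁻¹^1*(-(1^2)⁻¹)))) 1 := by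
    unfold g
    have h4 : HasDerivAt (fun t : ℝ => -3*t⁻¹^4 + 3*t^2)
        (-3*(4*(1:ℝ)⁻¹^3*(-(1^2)⁻¹)) + 3*(2*1)) 1 := by
      have := ((hinv.pow 4).const_mul (-3:ℝ)).add ((hasDerivAt_pow 2 (1:ℝ)).const_mul 3)
      simpa [Pi.add_def, Pi.pow_def, mul_comm, mul_assoc, mul_left_comm] using this
    have h3 : HasDerivAt (fun t : ℝ => -2*t⁻¹^3 + 2*t)
        (-2*(3*(1:ℝ)⁻¹^2*(-(1^2)⁻¹)) + 2) 1 := by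
      have := ((hinv.pow 3).const_mul (-2:ℝ)).add ((hasDerivAt_id (1:ℝ)).const_mul 2)
      simpa [Pi.add_def, Pi.pow_def, mul_comm, mul_assoc, mul_left_comm] using this
    have h2 : HasDerivAt (fun t : ℝ => -t⁻¹^2 + 1) (-(2*(1:ℝ)⁻¹^1*(-(1^2)⁻¹))) 1 := by
      have := ((hinv.pow 2).neg).add_const (1:ℝ)
      simpa [mul_comm, mul_assoc, mul_left_comm] using this
    exact ((h4.const_mul (-x^4)).add (h3.const_mul (6*x^4 - x^2))).sub
      (h2.const_mul (15*x^4 - 4*x^2))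
  rw [h.deriv]
  norm_num
  ring
end

section
/- For every integer x ≥ 1, the continued fraction [2x, 2, −2x, 2x, 2, −2x] equals (8x² − 1)² / (32x³ − 8x² − 8x + 2). -/
/-- The value of the continued fraction `[a₀, a₁, …, aₙ] = a₀ + 1/(a₁ + 1/(⋯ + 1/aₙ))`,
computed in `ℚ` (note `(0 : ℚ)⁻¹ = 0`, so `cf [a] = a`). -/
def cf : List ℤ → ℚ
  | [] => 0
  | a :: l => a + (cf l)⁻¹

theorem conway_form_eq_schubert_form (x : ℤ) (hx : 1 ≤ x) :
    cf [2*x, 2, -2*x, 2*x, 2, -2*x] =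
      (8*(x:ℚ)^2 - 1)^2 / (32*(x:ℚ)^3 - 8*(x:ℚ)^2 - 8*(x:ℚ) + 2) := by
  simp only [cf]
  push_cast
  set X := (x:ℚ) with hXdef
  have hq : (1:ℚ) ≤ X := by rw [hXdef]; exact_mod_cast hx
  have n0 : X ≠ 0 := by linarith
  have n1 : 4*X - 1 ≠ 0 := by nlinarith
  have n2 : 8*X^2 ≠ 0 := by positivity
  have n3 : -16*X^3 + 4*X - 1 ≠ 0 := by
    intro h
    nlinarith [mul_nonneg (mul_nonneg (sub_nonneg.2 hq) (by linarith : (0:ℚ) ≤ X))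
      (by linarith : (0:ℚ) ≤ X+1)]
  have n4 : 32*X^3 - 8*X^2 - 8*X + 2 ≠ 0 := by nlinarith [sq_nonneg (X-1), sq_nonneg X]
  rw [inv_zero, add_zero]
  have h1 : 2 + (-2*X)⁻¹ = (4*X-1)/(2*X) := by field_simp; ring
  rw [h1]
  have h2 : 2*X + ((4*X-1)/(2*X))⁻¹ = 8*X^2/(4*X-1) := by
    rw [inv_div, eq_div_iff n1, add_mul, div_mul_cancel₀ _ n1]; ring
  rw [h2]
  have h3 : -2*X + (8*X^2/(4*X-1))⁻¹ = (-16*X^3 + 4*X - 1)/(8*X^2) := by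
    rw [inv_div, eq_div_iff n2, add_mul, div_mul_cancel₀ _ n2]; ring
  rw [h3]
  have h4 : 2 + ((-16*X^3 + 4*X - 1)/(8*X^2))⁻¹ =
      (-32*X^3 + 8*X^2 + 8*X - 2)/(-16*X^3 + 4*X - 1) := by
    rw [inv_div, eq_div_iff n3, add_mul, div_mul_cancel₀ _ n3]; ring
  rw [h4]
  have n4' : -32*X^3 + 8*X^2 + 8*X - 2 ≠ 0 := by intro h; apply n4; linarith
  have h5 : 2*X + ((-32*X^3+8*X^2+8*X-2)/(-16*X^3+4*X-1))⁻¹ =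
      (-64*X^4+16*X^2-1)/(-32*X^3+8*X^2+8*X-2) := by
    rw [inv_div, eq_div_iff n4', add_mul, div_mul_cancel₀ _ n4']; ring
  rw [h5, div_eq_div_iff n4' n4]
  ring
end

section
/- For every integer x ≥ 2, the continued fraction [0, 2x, 1, 1, 2x−2, 1, 2x−1, 1, 1, 2x−1] equals (32x³ − 8x² − 8x + 2) / (8x² − 1)². -/
theorem simple_continued_fraction_Kx (x : ℤ) (hx : 2 ≤ x) :
    cf [0, 2*x, 1, 1, 2*x - 2, 1, 2*x - 1, 1, 1, 2*x - 1] =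
      (32*(x:ℚ)^3 - 8*(x:ℚ)^2 - 8*(x:ℚ) + 2) / (8*(x:ℚ)^2 - 1)^2 := by
  have hy : (2:ℚ) ≤ (x:ℚ) := by exact_mod_cast hx
  set y : ℚ := (x:ℚ) with hydef
  simp only [cf]
  push_cast
  have d0 : 2*y - 1 ≠ 0 := by nlinarith
  have e0 : 2*y - 1 + (0:ℚ)⁻¹ = 2*y - 1 := by norm_num
  rw [e0]
  have e1 : 1 + (2*y - 1)⁻¹ = (2*y)/(2*y-1) := by field_simp; ring
  rw [e1]
  have dy : (2*y) ≠ 0 := by nlinarith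
  rw [inv_div]
  have e2 : 1 + (2*y-1)/(2*y) = (4*y-1)/(2*y) := by field_simp; ring
  rw [e2, inv_div]
  have d2 : 4*y-1 ≠ 0 := by nlinarith
  have e3 : 2*y - 1 + (2*y)/(4*y-1) = (8*y^2-4*y+1)/(4*y-1) := by rw [eq_div_iff d2, add_mul, div_mul_cancel₀ _ d2]; ring
  rw [e3, inv_div]
  have d3 : 8*y^2-4*y+1 ≠ 0 := by nlinarith
  have e4 : 1 + (4*y-1)/(8*y^2-4*y+1) = (8*y^2)/(8*y^2-4*y+1) := by rw [eq_div_iff d3, add_mul, div_mul_cancel₀ _ d3]; ring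
  rw [e4, inv_div]
  have d4 : (8*y^2:ℚ) ≠ 0 := by nlinarith
  have e5 : 2*y - 2 + (8*y^2-4*y+1)/(8*y^2) = (16*y^3-8*y^2-4*y+1)/(8*y^2) := by
    field_simp; ring
  rw [e5, inv_div]
  have d5 : 16*y^3-8*y^2-4*y+1 ≠ 0 := by nlinarith
  have e6 : 1 + (8*y^2)/(16*y^3-8*y^2-4*y+1) = (16*y^3-4*y+1)/(16*y^3-8*y^2-4*y+1) := by
    rw [eq_div_iff d5, add_mul, div_mul_cancel₀ _ d5]; ring
  rw [e6, inv_div]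
  have d6 : 16*y^3-4*y+1 ≠ 0 := by nlinarith
  have e7 : 1 + (16*y^3-8*y^2-4*y+1)/(16*y^3-4*y+1) = (32*y^3-8*y^2-8*y+2)/(16*y^3-4*y+1) := by
    rw [eq_div_iff d6, add_mul, div_mul_cancel₀ _ d6]; ring
  rw [e7, inv_div]
  have d7 : 32*y^3-8*y^2-8*y+2 ≠ 0 := by nlinarith
  have e8 : 2*y + (16*y^3-4*y+1)/(32*y^3-8*y^2-8*y+2) = ((8*y^2-1)^2)/(32*y^3-8*y^2-8*y+2) := by
    rw [eq_div_iff d7, add_mul, div_mul_cancel₀ _ d7]; ring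
  rw [e8, inv_div, zero_add]
end

section
/- Let b₀ be an integer, b₁ ≥ 1 an integer, and b₂, …, bₙ positive integers. Then the continued fractions [b₀, 2b₁, b₂, b₃, …, bₙ] and [b₀+1, (−2,2)^{b₁−1}, −2, b₂+1, b₃, …, bₙ] are equal, where (−2,2)^{k} denotes the block −2, 2 repeated k times. -/
/-- `blk a b k` is the block `a, b` repeated `k` times. -/
def blk (a b : ℤ) : ℕ → List ℤ
  | 0 => []
  | k + 1 => a :: b :: blk a b k

lemma cf_one_le : ∀ (l : List ℤ) (a : ℤ), 0 < a → (∀ x ∈ l, 0 < x) → 1 ≤ cf (a :: l)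
  | [], a, ha, _ => by
      simp [cf]
      exact_mod_cast ha
  | b :: l', a, ha, hl => by
      have hb : (0:ℤ) < b := hl b (by simp)
      have ih : 1 ≤ cf (b :: l') := cf_one_le l' b hb (fun x hx => hl x (by simp [hx]))
      have h1 : (cf (b :: l'))⁻¹ ≤ 1 := by
        rw [inv_le_one_iff₀]; right; exact ih
      have h2 : 0 ≤ (cf (b :: l'))⁻¹ := inv_nonneg.2 (by linarith)
      have : (1:ℚ) ≤ (a:ℚ) := by exact_mod_cast ha
      show 1 ≤ (a:ℚ) + (cf (b :: l'))⁻¹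
      linarith

lemma blk_cf : ∀ (k : ℕ) (L : List ℤ) (t : ℚ), 0 ≤ t →
    cf L = -(2 + t) / (1 + t) →
    cf (blk (-2) 2 k ++ L) = -((2*k + 2) + t) / ((2*k + 1) + t)
  | 0, L, t, ht, hL => by simpa [blk] using hL
  | k + 1, L, t, ht, hL => by
      have ih := blk_cf k L t ht hL
      have h1 : (0:ℚ) < (2*k + 1) + t := by positivity
      have h2 : (0:ℚ) < (2*k + 2) + t := by positivity
      have h3 : (0:ℚ) < (2*k + 3) + t := by positivity
      show (-2 : ℤ) + ((2:ℤ) + (cf (blk (-2) 2 k ++ L))⁻¹)⁻¹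
          = -((2*(k+1 : ℕ) + 2) + t) / ((2*(k+1 : ℕ) + 1) + t)
      rw [ih]
      push_cast
      rw [show -(2*(k:ℚ)+2+t)/(2*(k:ℚ)+1+t) = -((2*(k:ℚ)+2+t)/(2*(k:ℚ)+1+t)) from by ring,
        inv_neg, inv_div]
      have h4 : (2:ℚ) - (2*(k:ℚ)+1+t)/(2*(k:ℚ)+2+t) = ((2*(k:ℚ)+3+t))/((2*(k:ℚ)+2+t)) := by
        field_simp
        ring
      rw [show (2:ℚ) + -((2*(k:ℚ)+1+t)/(2*(k:ℚ)+2+t)) = 2 - (2*(k:ℚ)+1+t)/(2*(k:ℚ)+2+t) from by ring, h4, inv_div]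
      rw [eq_div_iff (show (2*((k:ℚ)+1)+1+t) ≠ 0 by positivity)]
      field_simp
      ring

theorem substitution_one (b₀ b₁ : ℤ) (hb₁ : 1 ≤ b₁) (b₂ : ℤ) (hb₂ : 0 < b₂)
    (l : List ℤ) (hl : ∀ a ∈ l, 0 < a) :
    cf (b₀ :: 2*b₁ :: b₂ :: l) =
      cf ((b₀ + 1) :: blk (-2) 2 (b₁ - 1).toNat ++ (-2) :: (b₂ + 1) :: l) := by
  have hx : 1 ≤ cf (b₂ :: l) := cf_one_le l b₂ hb₂ hl
  set x := cf (b₂ :: l) with hxdef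
  have hx0 : (0:ℚ) < x := by linarith
  set t : ℚ := x⁻¹ with htdef
  have ht0 : 0 ≤ t := by positivity
  have hL : cf ((-2) :: (b₂ + 1) :: l) = -(2 + t) / (1 + t) := by
    have h1 : cf ((b₂ + 1) :: l) = x + 1 := by
      show ((b₂ + 1 : ℤ) : ℚ) + (cf l)⁻¹ = x + 1
      have : x = (b₂ : ℚ) + (cf l)⁻¹ := rfl
      push_cast
      linarith
    show (-2 : ℤ) + (cf ((b₂ + 1) :: l))⁻¹ = -(2 + t) / (1 + t)
    rw [h1, htdef]
    have hx1 : (0:ℚ) < x + 1 := by linarith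
    push_cast
    have hti : (0:ℚ) < x⁻¹ := inv_pos.2 hx0
    rw [eq_div_iff (show (1:ℚ) + x⁻¹ ≠ 0 by linarith)]
    field_simp
    ring
  have key := blk_cf (b₁ - 1).toNat ((-2) :: (b₂ + 1) :: l) t ht0 hL
  have hcast : ((b₁ - 1).toNat : ℚ) = (b₁ : ℚ) - 1 := by
    have := Int.toNat_of_nonneg (by linarith : (0:ℤ) ≤ b₁ - 1)
    exact_mod_cast congrArg (Int.cast : ℤ → ℚ) this
  rw [hcast] at key
  show (b₀ : ℚ) + ((2*b₁ : ℤ) + x⁻¹)⁻¹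
      = ((b₀ + 1 : ℤ) : ℚ) + (cf (blk (-2) 2 (b₁ - 1).toNat ++ (-2) :: (b₂ + 1) :: l))⁻¹
  rw [key]
  have hb1q : (1:ℚ) ≤ (b₁ : ℚ) := by exact_mod_cast hb₁
  simp only [htdef]
  have hti : (0:ℚ) < x⁻¹ := inv_pos.2 hx0
  have h1 : (0:ℚ) < 2*(b₁:ℚ) + x⁻¹ := by linarith
  have h2 : (0:ℚ) < (2*((b₁:ℚ)-1) + 1) + x⁻¹ := by linarith
  have h3 : (2*((b₁:ℚ)-1) + 2) + x⁻¹ = 2*(b₁:ℚ) + x⁻¹ := by ring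
  push_cast
  rw [h3]
  rw [show -(2*(b₁:ℚ) + x⁻¹) / ((2*((b₁:ℚ)-1) + 1) + x⁻¹) = -((2*(b₁:ℚ) + x⁻¹) / ((2*((b₁:ℚ)-1) + 1) + x⁻¹)) from by ring]
  rw [inv_neg, inv_div]
  field_simp
  ring
end

section
/- For every integer x ≥ 2, the continued fraction [0, 2x, 2, −2x+1, −2, (2,−2)^{x−1}, 2, 2, (−2,2)^{x−1}] equals (32x³ − 8x² − 8x + 2) / (8x² − 1)², where (a,b)^{k} denotes the block a, b repeated k times. -/
lemma cf_cons (a : ℤ) (l : List ℤ) : cf (a :: l) = a + (cf l)⁻¹ := rfl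

lemma blk_succ (a b : ℤ) (k : ℕ) : blk a b (k+1) = a :: b :: blk a b k := rfl

lemma step4 (k : ℕ) : (2:ℚ) + (-(2*(k:ℚ)+3)/(2*k+2))⁻¹ = (2*(k:ℚ)+4)/(2*(k:ℚ)+3) := by
  have h1 : (2*(k:ℚ)+2) ≠ 0 := by positivity
  have h2 : (2*(k:ℚ)+3) ≠ 0 := by positivity
  rw [neg_div, inv_neg, inv_div]
  field_simp
  ring

lemma L1 (k : ℕ) : cf (blk (-2) 2 (k+1)) = -(2*(k:ℚ)+3)/(2*k+2) := by
  induction k with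
  | zero => norm_num [blk, cf]
  | succ k ih =>
    rw [blk_succ, cf_cons, cf_cons, ih]
    push_cast
    rw [step4, inv_div]
    have h3 : (2*(k:ℚ)+4) ≠ 0 := by positivity
    field_simp
    ring

lemma L2 (k j : ℕ) : cf (blk 2 (-2) j ++ ([2,2] ++ blk (-2) 2 (k+1))) =
    (8*(j:ℚ)*k+14*j+6*k+11)/(8*(j:ℚ)*k+14*j+2*k+4) := by
  induction j with
  | zero =>
    show cf (2 :: 2 :: blk (-2) 2 (k+1)) = _
    rw [cf_cons, cf_cons, L1]
    push_cast
    rw [step4, inv_div]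
    have h3 : (2*(k:ℚ)+4) ≠ 0 := by positivity
    field_simp
    ring
  | succ j ih =>
    rw [blk_succ, List.cons_append, List.cons_append, cf_cons, cf_cons, ih, inv_div]
    push_cast
    have hN : (8*(j:ℚ)*k+14*j+6*k+11) ≠ 0 := by positivity
    have hD : (8*(j:ℚ)*k+14*j+2*k+4) ≠ 0 := by positivity
    have h2 : (-2 : ℚ) + (8*(j:ℚ)*k+14*j+2*k+4)/(8*(j:ℚ)*k+14*j+6*k+11)
        = -((8*(j:ℚ)*k+14*j+10*k+18)/(8*(j:ℚ)*k+14*j+6*k+11)) := by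
      field_simp; ring
    rw [h2, inv_neg, inv_div]
    have h3 : (8*(j:ℚ)*k+14*j+10*k+18) ≠ 0 := by positivity
    have h4 : (8*((j:ℚ)+1)*k+14*((j:ℚ)+1)+2*k+4) ≠ 0 := by positivity
    field_simp
    ring

theorem boundary_slope_cf_case1 (x : ℤ) (hx : 2 ≤ x) :
    cf ([0, 2*x, 2, -2*x + 1, -2] ++ blk 2 (-2) (x - 1).toNat
        ++ [2, 2] ++ blk (-2) 2 (x - 1).toNat) =
      (32*(x:ℚ)^3 - 8*(x:ℚ)^2 - 8*(x:ℚ) + 2) / (8*(x:ℚ)^2 - 1)^2 := by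
  obtain ⟨k, hk⟩ : ∃ k : ℕ, (x - 1).toNat = k + 1 := ⟨(x-2).toNat, by omega⟩
  have hkx : (k : ℚ) = (x : ℚ) - 2 := by
    have : (k : ℤ) = x - 2 := by omega
    exact_mod_cast congrArg (Int.cast : ℤ → ℚ) this
  have hrw : ([0, 2*x, 2, -2*x + 1, -2] ++ blk 2 (-2) (x - 1).toNat
        ++ [2, 2] ++ blk (-2) 2 (x - 1).toNat)
      = 0 :: (2*x) :: 2 :: (-2*x+1) :: (-2) ::
        (blk 2 (-2) (k+1) ++ ([2,2] ++ blk (-2) 2 (k+1))) := by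
    rw [hk]; simp
  rw [hrw, cf_cons, cf_cons, cf_cons, cf_cons, cf_cons, L2 k (k+1)]
  push_cast
  rw [hkx]
  have hX2 : (2:ℚ) ≤ (x:ℚ) := by exact_mod_cast hx
  set X : ℚ := (x : ℚ) with hXdef
  have e0 : 8*(X-2+1)*(X-2)+14*(X-2+1)+6*(X-2)+11 = 8*X^2-4*X+1 := by ring
  have e0' : 8*(X-2+1)*(X-2)+14*(X-2+1)+2*(X-2)+4 = 8*X^2-8*X+2 := by ring
  rw [e0, e0']
  have p1 : (0:ℚ) < 8*X^2-4*X+1 := by nlinarith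
  have p2 : (0:ℚ) < 8*X^2-8*X+2 := by nlinarith
  have p3 : (0:ℚ) < X := by linarith
  have p4 : (0:ℚ) < 16*X^3-4*X+1 := by nlinarith
  have p5 : (0:ℚ) < 32*X^3-8*X^2-8*X+2 := by nlinarith
  have p6 : (0:ℚ) < 64*X^4-16*X^2+1 := by nlinarith
  have q1 : (8*X^2-4*X+1 : ℚ) ≠ 0 := p1.ne'
  have q2 : (8*X^2-8*X+2 : ℚ) ≠ 0 := p2.ne'
  have q3 : (X : ℚ) ≠ 0 := p3.ne'
  have q4 : (16*X^3-4*X+1 : ℚ) ≠ 0 := p4.ne'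
  have q5 : (32*X^3-8*X^2-8*X+2 : ℚ) ≠ 0 := p5.ne'
  have q6 : (64*X^4-16*X^2+1 : ℚ) ≠ 0 := p6.ne'
  have s1 : (-2:ℚ) + ((8*X^2-4*X+1)/(8*X^2-8*X+2))⁻¹ = -((8*X^2)/(8*X^2-4*X+1)) := by
    rw [inv_div]; rw [← neg_div, eq_div_iff q1, add_mul, div_mul_cancel₀ _ q1]; ring
  rw [s1, inv_neg, inv_div]
  have s2 : (-2*X+1:ℚ) + -((8*X^2-4*X+1)/(8*X^2)) = -((16*X^3-4*X+1)/(8*X^2)) := by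
    field_simp; ring
  rw [s2, inv_neg, inv_div]
  have s3 : (2:ℚ) + -(8*X^2/(16*X^3-4*X+1)) = (32*X^3-8*X^2-8*X+2)/(16*X^3-4*X+1) := by
    rw [eq_div_iff q4, add_mul, neg_mul, div_mul_cancel₀ _ q4]; ring
  rw [s3, inv_div]
  have s4 : 2*X + (16*X^3-4*X+1)/(32*X^3-8*X^2-8*X+2)
      = (64*X^4-16*X^2+1)/(32*X^3-8*X^2-8*X+2) := by
    rw [eq_div_iff q5, add_mul, div_mul_cancel₀ _ q5]; ring
  rw [s4, inv_div, zero_add]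
  have q7 : ((8*X^2-1)^2 : ℚ) ≠ 0 := pow_ne_zero 2 (by nlinarith)
  rw [div_eq_div_iff q6 q7]
  ring
end

section
/- For every integer x ≥ 2, the continued fraction [0, 2x, 2, −2x+1, −2, (2,−2)^{x−1}, 3, −2x] equals (32x³ − 8x² − 8x + 2) / (8x² − 1)², where (a,b)^{k} denotes the block a, b repeated k times. -/
lemma cf_step (a n d m : ℚ) (hd : d ≠ 0) (h : a * d + n = m) : a + n / d = m / d := by
  rw [← h, add_div, mul_div_cancel_right₀ a hd]

lemma aux (x : ℤ) (hx : 2 ≤ x) (k : ℕ) :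
    cf (blk 2 (-2) k ++ [3, -2*x]) =
      (8*(k:ℚ)*(x:ℚ) - 2*(k:ℚ) + 6*(x:ℚ) - 1) / (8*(k:ℚ)*(x:ℚ) - 2*(k:ℚ) + 2*(x:ℚ)) := by
  have hX : (2:ℚ) ≤ (x:ℚ) := by exact_mod_cast hx
  induction k with
  | zero =>
      have hx0 : (x:ℚ) ≠ 0 := by nlinarith
      simp only [blk, List.nil_append, cf]
      push_cast
      field_simp
      ring
  | succ k ih =>
      have hK : (0:ℚ) ≤ (k:ℚ) := Nat.cast_nonneg k
      have hN : 8*(k:ℚ)*(x:ℚ) - 2*(k:ℚ) + 6*(x:ℚ) - 1 ≠ 0 := by nlinarith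
      have hM : -8*(k:ℚ)*(x:ℚ) + 2*(k:ℚ) - 10*(x:ℚ) + 2 ≠ 0 := by nlinarith
      rw [show blk 2 (-2) (k+1) ++ [3, -2*x] = 2 :: (-2 :: (blk 2 (-2) k ++ [3, -2*x])) from rfl,
        cf, cf, ih]
      push_cast
      rw [inv_div,
        cf_step (-2) _ _ (-8*(k:ℚ)*(x:ℚ) + 2*(k:ℚ) - 10*(x:ℚ) + 2) hN (by ring),
        inv_div,
        cf_step 2 _ _ (-8*(k:ℚ)*(x:ℚ) + 2*(k:ℚ) - 14*(x:ℚ) + 3) hM (by ring)]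
      rw [div_eq_div_iff hM (by nlinarith)]
      ring

theorem boundary_slope_cf_case2 (x : ℤ) (hx : 2 ≤ x) :
    cf ([0, 2*x, 2, -2*x + 1, -2] ++ blk 2 (-2) (x - 1).toNat ++ [3, -2*x]) =
      (32*(x:ℚ)^3 - 8*(x:ℚ)^2 - 8*(x:ℚ) + 2) / (8*(x:ℚ)^2 - 1)^2 := by
  have hX : (2:ℚ) ≤ (x:ℚ) := by exact_mod_cast hx
  have hk' : (((x-1).toNat : ℕ) : ℚ) = (x:ℚ) - 1 := by
    have : (((x-1).toNat : ℤ) : ℚ) = ((x - 1 : ℤ) : ℚ) := by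
      rw [Int.toNat_of_nonneg (by omega)]
    push_cast at this ⊢
    linarith
  have hv : cf (blk 2 (-2) (x-1).toNat ++ [3, -2*x]) =
      (8*(x:ℚ)^2 - 4*(x:ℚ) + 1) / (8*(x:ℚ)^2 - 8*(x:ℚ) + 2) := by
    rw [aux x hx, hk']
    ring_nf
  have h1 : (8*(x:ℚ)^2 - 4*(x:ℚ) + 1) ≠ 0 := by nlinarith
  have h1' : (-8*(x:ℚ)^2 : ℚ) ≠ 0 := by nlinarith
  have h2 : (16*(x:ℚ)^3 - 4*(x:ℚ) + 1) ≠ 0 := by nlinarith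
  have h3 : (32*(x:ℚ)^3 - 8*(x:ℚ)^2 - 8*(x:ℚ) + 2) ≠ 0 := by nlinarith
  have h4 : ((8*(x:ℚ)^2 - 1)^2 : ℚ) ≠ 0 := pow_ne_zero 2 (by nlinarith)
  rw [show [0, 2*x, 2, -2*x + 1, -2] ++ blk 2 (-2) (x - 1).toNat ++ [3, -2*x]
      = 0 :: (2*x) :: 2 :: (-2*x+1) :: (-2) :: (blk 2 (-2) (x - 1).toNat ++ [3, -2*x]) from by
    simp, cf, cf, cf, cf, cf, hv]
  push_cast
  rw [inv_div,
    cf_step (-2) _ _ (-8*(x:ℚ)^2) h1 (by ring),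
    inv_div,
    cf_step (-2*(x:ℚ)+1) _ _ (16*(x:ℚ)^3 - 4*(x:ℚ) + 1) h1' (by ring),
    inv_div,
    cf_step 2 _ _ (32*(x:ℚ)^3 - 8*(x:ℚ)^2 - 8*(x:ℚ) + 2) h2 (by ring),
    inv_div,
    cf_step (2*(x:ℚ)) _ _ ((8*(x:ℚ)^2-1)^2) h3 (by ring),
    inv_div, zero_add]
end

section
/- For every integer x ≥ 2, the continued fraction [0, 2x, 2, −2x, 2x+1, −3, (2,−2)^{x−1}] equals (32x³ − 8x² − 8x + 2) / (8x² − 1)², where (a,b)^{k} denotes the block a, b repeated k times. -/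
lemma cf_blk (k : ℕ) : cf (blk 2 (-2) (k+1)) = (2*(k:ℚ)+3)/(2*k+2) := by
  induction k with
  | zero => simp [blk, cf]; norm_num
  | succ n ih =>
    have h1 : (2*(n:ℚ)+2) ≠ 0 := by positivity
    have h2 : (2*(n:ℚ)+3) ≠ 0 := by positivity
    have h4 : (2*(n:ℚ)+4) ≠ 0 := by positivity
    show cf (2 :: -2 :: blk 2 (-2) (n+1)) = _
    rw [cf_cons, cf_cons, ih]
    push_cast
    rw [inv_div]
    have h3 : (-2 + (2*(n:ℚ)+2)/(2*n+3)) = -((2*n+4)/(2*n+3)) := by field_simp; ring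
    rw [h3, inv_neg, inv_div]
    field_simp
    ring

theorem boundary_slope_cf_case5 (x : ℤ) (hx : 2 ≤ x) :
    cf ([0, 2*x, 2, -2*x, 2*x + 1, -3] ++ blk 2 (-2) (x - 1).toNat) =
      (32*(x:ℚ)^3 - 8*(x:ℚ)^2 - 8*(x:ℚ) + 2) / (8*(x:ℚ)^2 - 1)^2 := by
  have hk : (x - 1).toNat = (x-2).toNat + 1 := by omega
  have hc : ((x-2).toNat : ℚ) = (x:ℚ) - 2 := by
    have h0 : ((x-2).toNat : ℤ) = x - 2 := Int.toNat_of_nonneg (by omega)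
    exact_mod_cast h0
  have hT : cf (blk 2 (-2) (x - 1).toNat) = (2*(x:ℚ)-1)/(2*(x:ℚ)-2) := by
    rw [hk, cf_blk, hc]; ring_nf
  have hX : (2:ℚ) ≤ (x:ℚ) := by exact_mod_cast hx
  set X := (x:ℚ) with hXdef
  have d1 : 2*X-2 ≠ 0 := by nlinarith
  have d2 : 2*X-1 ≠ 0 := by nlinarith
  have d3 : 4*X-1 ≠ 0 := by nlinarith
  have d4 : (8:ℚ)*X^2 ≠ 0 := by nlinarith
  have d5 : 16*X^3-4*X+1 ≠ 0 := by nlinarith [sq_nonneg X, sq_nonneg (X-2), mul_self_nonneg (X*(X-2))]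
  have d6 : 32*X^3-8*X^2-8*X+2 ≠ 0 := by nlinarith [sq_nonneg X, sq_nonneg (X-2), mul_self_nonneg (X*(X-2))]
  have e1 : (-3:ℚ) + ((2*X-1)/(2*X-2))⁻¹ = -((4*X-1)/(2*X-1)) := by
    rw [inv_div]; field_simp; ring
  have e2 : 2*X+1 + (-((4*X-1)/(2*X-1)))⁻¹ = (8*X^2)/(4*X-1) := by
    rw [inv_neg, inv_div]; rw [eq_div_iff d3, add_mul, neg_mul, div_mul_cancel₀ _ d3]; ring
  have e3 : -2*X + ((8*X^2)/(4*X-1))⁻¹ = -((16*X^3-4*X+1)/(8*X^2)) := by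
    rw [inv_div]; field_simp; ring
  have e4 : (2:ℚ) + (-((16*X^3-4*X+1)/(8*X^2)))⁻¹ = (32*X^3-8*X^2-8*X+2)/(16*X^3-4*X+1) := by
    rw [inv_neg, inv_div]; rw [eq_div_iff d5, add_mul, neg_mul, div_mul_cancel₀ _ d5]; ring
  have e5 : 2*X + ((32*X^3-8*X^2-8*X+2)/(16*X^3-4*X+1))⁻¹ = (8*X^2-1)^2/(32*X^3-8*X^2-8*X+2) := by
    rw [inv_div]; rw [eq_div_iff d6, add_mul, div_mul_cancel₀ _ d6]; ring
  simp only [List.cons_append, List.nil_append, cf_cons, hT]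
  push_cast
  rw [← hXdef] 
  rw [e1, e2, e3, e4, e5, inv_div, zero_add]
end

section
/- For every integer x ≥ 2, the continued fraction [0, 2x+1, −3, (2,−2)^{x−2}, 2, −3, (2,−2)^{x−1}, 3, −2x] equals (32x³ − 8x² − 8x + 2) / (8x² − 1)², where (a,b)^{k} denotes the block a, b repeated k times. -/
lemma blk_aux (L : List ℤ) (h : 1 < cf L) : ∀ k : ℕ,
    cf (blk 2 (-2) k ++ L) = ((2*k+1)*cf L - 2*k)/((2*k)*cf L + (1-2*k)) := by
  intro k
  induction k with
  | zero => simp [blk]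
  | succ k ih =>
    have hk : (0:ℚ) ≤ (k:ℚ) := Nat.cast_nonneg k
    have hD : (0:ℚ) < 2*k*cf L + (1-2*k) := by nlinarith
    have hg : 1 < cf (blk 2 (-2) k ++ L) := by
      rw [ih, lt_div_iff₀ hD]; nlinarith
    have step : cf (blk 2 (-2) (k+1) ++ L) =
        2 + (-2 + (cf (blk 2 (-2) k ++ L))⁻¹)⁻¹ := by
      simp [blk, cf]
    have hN : (2*(k:ℚ)+1)*cf L - 2*k ≠ 0 := by nlinarith
    have hE : (-2)*((2*(k:ℚ)+1)*cf L - 2*k) + ((2*k)*cf L + (1-2*k)) ≠ 0 := by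
      nlinarith
    rw [step, ih, inv_div]
    rw [show -2 + ((2*(k:ℚ)*cf L + (1-2*k)) / ((2*k+1)*cf L - 2*k)) =
        ((-2)*((2*(k:ℚ)+1)*cf L - 2*k) + ((2*k)*cf L + (1-2*k))) / ((2*k+1)*cf L - 2*k)
      from by rw [eq_div_iff hN, add_mul, div_mul_cancel₀ _ hN], inv_div]
    have hD' : 2*((k:ℚ)+1)*cf L + (1-2*((k:ℚ)+1)) ≠ 0 := by nlinarith
    rw [add_div' _ _ _ hE]
    push_cast
    rw [div_eq_div_iff hE hD']
    ring

lemma moeb (t A B : ℚ) (hB : B ≠ 0) (h : 2*t*A + (1-2*t)*B ≠ 0) :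
    ((2*t+1)*(A/B) - 2*t)/(2*t*(A/B) + (1-2*t)) = ((2*t+1)*A - 2*t*B)/(2*t*A + (1-2*t)*B) := by
  have hden : 2*t*(A/B) + (1-2*t) = (2*t*A + (1-2*t)*B)/B := by field_simp
  rw [hden, div_eq_div_iff (div_ne_zero h hB) h]
  field_simp
  try ring
  try simp

theorem boundary_slope_cf_case15 (x : ℤ) (hx : 2 ≤ x) :
    cf ([0, 2*x + 1, -3] ++ blk 2 (-2) (x - 2).toNat ++ [2, -3]
        ++ blk 2 (-2) (x - 1).toNat ++ [3, -2*x]) =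
      (32*(x:ℚ)^3 - 8*(x:ℚ)^2 - 8*(x:ℚ) + 2) / (8*(x:ℚ)^2 - 1)^2 := by
  have hX : (2:ℚ) ≤ (x:ℚ) := by exact_mod_cast hx
  set X : ℚ := (x:ℚ) with hXdef
  have hk1 : (((x-2).toNat : ℕ) : ℚ) = X - 2 := by
    have h := Int.toNat_of_nonneg (show (0:ℤ) ≤ x - 2 by omega)
    have : (((x-2).toNat : ℤ) : ℚ) = ((x - 2 : ℤ) : ℚ) := by rw [h]
    push_cast at this ⊢
    linarith
  have hk2 : (((x-1).toNat : ℕ) : ℚ) = X - 1 := by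
    have h := Int.toNat_of_nonneg (show (0:ℤ) ≤ x - 1 by omega)
    have : (((x-1).toNat : ℤ) : ℚ) = ((x - 1 : ℤ) : ℚ) := by rw [h]
    push_cast at this ⊢
    linarith
  have hX0 : (2:ℚ)*X ≠ 0 := by nlinarith
  have h1 : cf [3, -2*x] = (6*X - 1)/(2*X) := by
    simp [cf]
    push_cast
    field_simp
    ring
  have hq1 : 1 < cf [3, -2*x] := by
    rw [h1, lt_div_iff₀ (by nlinarith)]; nlinarith
  have e1 : cf (blk 2 (-2) (x-1).toNat ++ [3, -2*x])
      = (8*X^2 - 4*X + 1)/(8*X^2 - 8*X + 2) := by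
    rw [blk_aux _ hq1, h1, hk2]
    rw [div_eq_div_iff (by nlinarith) (by nlinarith)]
    field_simp
    ring
  have e2 : cf (2 :: -3 :: (blk 2 (-2) (x-1).toNat ++ [3, -2*x]))
      = (24*X^2 - 4*X + 1)/(16*X^2 - 4*X + 1) := by
    simp only [cf]
    rw [e1]
    push_cast
    rw [inv_div, add_div' _ _ _ (show 8*X^2 - 4*X + 1 ≠ 0 from ne_of_gt (by nlinarith))]
    rw [inv_div, add_div' _ _ _ (show -3*(8*X^2 - 4*X + 1) + (8*X^2 - 8*X + 2) ≠ 0 from ne_of_lt (by nlinarith))]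
    rw [div_eq_div_iff (ne_of_lt (by nlinarith)) (ne_of_gt (by nlinarith))]
    ring
  have hq2 : 1 < cf (2 :: -3 :: (blk 2 (-2) (x-1).toNat ++ [3, -2*x])) := by
    rw [e2, lt_div_iff₀ (by nlinarith)]; nlinarith
  have e3 : cf (blk 2 (-2) (x-2).toNat ++ (2 :: -3 :: (blk 2 (-2) (x-1).toNat ++ [3, -2*x])))
      = (16*X^3 - 8*X^2 - 4*X + 1)/(16*X^3 - 16*X^2 - 4*X + 1) := by
    rw [blk_aux _ hq2, e2, hk1,
      moeb _ _ _ (ne_of_gt (by nlinarith)) (ne_of_gt (by nlinarith))]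
    rw [div_eq_div_iff (ne_of_gt (by nlinarith)) (ne_of_gt (by nlinarith))]
    ring
  have hList : ([0, 2*x + 1, -3] ++ blk 2 (-2) (x - 2).toNat ++ [2, -3]
        ++ blk 2 (-2) (x - 1).toNat ++ [3, -2*x])
      = 0 :: (2*x+1) :: -3 ::
        (blk 2 (-2) (x-2).toNat ++ (2 :: -3 :: (blk 2 (-2) (x-1).toNat ++ [3, -2*x]))) := by
    simp
  rw [hList]
  simp only [cf]
  rw [e3]
  push_cast
  rw [inv_div, add_div' _ _ _ (ne_of_gt (show (0:ℚ) < 16*X^3 - 8*X^2 - 4*X + 1 by nlinarith))]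
  rw [inv_div, add_div' _ _ _ (ne_of_lt (show -3*(16*X^3 - 8*X^2 - 4*X + 1) + (16*X^3 - 16*X^2 - 4*X + 1) < 0 by nlinarith))]
  rw [inv_div, zero_add]
  rw [div_eq_div_iff (by
    intro hcon; rw [← hXdef] at hcon
    nlinarith [mul_pos (show (0:ℚ) < 8*X^2 - 1 by nlinarith) (show (0:ℚ) < 8*X^2 - 1 by nlinarith)]) (pow_ne_zero 2 (ne_of_gt (show (0:ℚ) < 8*X^2 - 1 by nlinarith)))]
  push_cast
  ring
end

section
/- For every integer x ≥ 2, the continued fraction [0, 2x+1, −3, (2,−2)^{x−2}, 2, −3, (2,−2)^{x−1}, 2, 2, (−2,2)^{x−1}] equals (32x³ − 8x² − 8x + 2) / (8x² − 1)², where (a,b)^{k} denotes the block a, b repeated k times. -/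
lemma mstep {y p q : ℚ} (c : ℚ) (h : y = p / q) (hp : p ≠ 0) :
    c + y⁻¹ = (c * p + q) / p := by
  subst h; rw [inv_div]; field_simp

lemma lemA (k : ℕ) : cf (blk (-2) 2 (k + 1)) = (-(2*(k:ℚ)+3)) / (2*(k:ℚ)+2) := by
  induction k with
  | zero => norm_num [blk, cf]
  | succ k ih =>
    have hp : (-(2*(k:ℚ)+3)) ≠ 0 := neg_ne_zero.mpr (by positivity)
    have hp3 : (-(2*(k:ℚ)+4)) ≠ 0 := neg_ne_zero.mpr (by positivity)
    have e1 : cf (2 :: blk (-2) 2 (k+1)) = (-(2*(k:ℚ)+4)) / (-(2*(k:ℚ)+3)) := by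
      rw [cf_cons, mstep _ ih hp, div_eq_div_iff hp hp]
      push_cast; ring
    show cf ((-2) :: 2 :: blk (-2) 2 (k+1)) = _
    rw [cf_cons, mstep _ e1 hp3]
    push_cast
    rw [div_eq_div_iff hp3 (by positivity : (2*((k:ℚ)+1)+2) ≠ 0)]
    ring

lemma lemBC (k j : ℕ) :
    cf (blk 2 (-2) j ++ 2 :: 2 :: blk (-2) 2 (k + 1)) =
      (6*(k:ℚ)+11 + j*(8*(k:ℚ)+14)) / (2*(k:ℚ)+4 + j*(8*(k:ℚ)+14)) := by
  induction j with
  | zero =>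
    have hp : (-(2*(k:ℚ)+3)) ≠ 0 := neg_ne_zero.mpr (by positivity)
    have h24 : (2*(k:ℚ)+4) ≠ 0 := by positivity
    have e1 : cf (2 :: blk (-2) 2 (k+1)) = (2*(k:ℚ)+4) / (2*(k:ℚ)+3) := by
      rw [cf_cons, mstep _ (lemA k) hp, div_eq_div_iff hp (by positivity : (2*(k:ℚ)+3) ≠ 0)]
      push_cast; ring
    show cf (2 :: 2 :: blk (-2) 2 (k+1)) = _
    rw [cf_cons, mstep _ e1 h24]
    push_cast
    rw [div_eq_div_iff h24 (by positivity)]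
    ring
  | succ j ih =>
    have hN : (6*(k:ℚ)+11 + j*(8*(k:ℚ)+14)) ≠ 0 := by positivity
    have hM : (-(10*(k:ℚ)+18 + j*(8*(k:ℚ)+14))) ≠ 0 := neg_ne_zero.mpr (by positivity)
    have e1 : cf ((-2) :: (blk 2 (-2) j ++ 2 :: 2 :: blk (-2) 2 (k + 1))) =
        (-(10*(k:ℚ)+18 + j*(8*(k:ℚ)+14))) / (6*(k:ℚ)+11 + j*(8*(k:ℚ)+14)) := by
      rw [cf_cons, mstep _ ih hN, div_eq_div_iff hN hN]
      push_cast; ring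
    show cf (2 :: (-2) :: (blk 2 (-2) j ++ 2 :: 2 :: blk (-2) 2 (k + 1))) = _
    rw [cf_cons, mstep _ e1 hM]
    push_cast
    rw [div_eq_div_iff hM (by positivity : (2*(k:ℚ)+4 + ((j:ℚ)+1)*(8*(k:ℚ)+14)) ≠ 0)]
    ring

lemma lemE (X : ℚ) (hX : 2 ≤ X) (l : List ℤ)
    (hl : cf l = (4*X - 1 - 24*X^2) / (4*X - 1 - 16*X^2)) (m : ℕ) :
    cf (blk 2 (-2) m ++ l) =
      (4*X - 1 - 24*X^2 - 16*m*X^2) / (4*X - 1 - 16*X^2 - 16*m*X^2) := by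
  induction m with
  | zero => simpa [blk] using hl
  | succ m ih =>
    have hX2 : (4:ℚ) ≤ X^2 := by nlinarith
    have hp : (4*X - 1 - 24*X^2 - 16*m*X^2) ≠ 0 := by
      have : (0:ℚ) ≤ 16*m*X^2 := by positivity
      nlinarith
    have hR : (32*X^2 - 4*X + 1 + 16*m*X^2) ≠ 0 := by
      have : (0:ℚ) ≤ 16*m*X^2 := by positivity
      nlinarith
    have e1 : cf ((-2) :: (blk 2 (-2) m ++ l)) =
        (32*X^2 - 4*X + 1 + 16*m*X^2) / (4*X - 1 - 24*X^2 - 16*m*X^2) := by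
      rw [cf_cons, mstep _ ih hp, div_eq_div_iff hp hp]
      push_cast; ring
    show cf (2 :: (-2) :: (blk 2 (-2) m ++ l)) = _
    have hq : (4*X - 1 - 16*X^2 - 16*((m:ℚ)+1)*X^2) ≠ 0 := by
      have : (0:ℚ) ≤ 16*m*X^2 := by positivity
      nlinarith
    rw [cf_cons, mstep _ e1 hR]
    push_cast
    rw [div_eq_div_iff hR hq]
    ring

theorem boundary_slope_cf_case14 (x : ℤ) (hx : 2 ≤ x) :
    cf ([0, 2*x + 1, -3] ++ blk 2 (-2) (x - 2).toNat ++ [2, -3]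
        ++ blk 2 (-2) (x - 1).toNat ++ [2, 2] ++ blk (-2) 2 (x - 1).toNat) =
      (32*(x:ℚ)^3 - 8*(x:ℚ)^2 - 8*(x:ℚ) + 2) / (8*(x:ℚ)^2 - 1)^2 := by
  set n : ℕ := (x - 2).toNat with hn
  have hn1 : (x - 1).toNat = n + 1 := by omega
  have hnQ : (n:ℚ) = (x:ℚ) - 2 := by
    have : (n:ℤ) = x - 2 := by omega
    exact_mod_cast congrArg (Int.cast : ℤ → ℚ) this
  have hxQ : (2:ℚ) ≤ (x:ℚ) := by exact_mod_cast hx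
  rw [hn1]
  have hlist : [0, 2*x + 1, -3] ++ blk 2 (-2) n ++ [2, -3]
        ++ blk 2 (-2) (n+1) ++ [2, 2] ++ blk (-2) 2 (n+1)
      = 0 :: (2*x+1) :: (-3) ::
        (blk 2 (-2) n ++ (2 :: (-3) :: (blk 2 (-2) (n+1) ++ 2 :: 2 :: blk (-2) 2 (n+1)))) := by
    simp [List.append_assoc]
  rw [hlist]
  -- value after the [2,2] ++ tail block with leading blk 2 (-2) (n+1)
  have hC : cf (blk 2 (-2) (n+1) ++ 2 :: 2 :: blk (-2) 2 (n+1)) =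
      (8*(x:ℚ)^2 - 4*(x:ℚ) + 1) / (8*(x:ℚ)^2 - 8*(x:ℚ) + 2) := by
    rw [lemBC n (n+1)]
    push_cast
    rw [hnQ]
    ring_nf
  have hCnum : (8*(x:ℚ)^2 - 4*(x:ℚ) + 1) ≠ 0 := by nlinarith
  have hD1 : (-16*(x:ℚ)^2 + 4*(x:ℚ) - 1) ≠ 0 := by nlinarith
  have e1 : cf ((-3) :: (blk 2 (-2) (n+1) ++ 2 :: 2 :: blk (-2) 2 (n+1))) =
      (-16*(x:ℚ)^2 + 4*(x:ℚ) - 1) / (8*(x:ℚ)^2 - 4*(x:ℚ) + 1) := by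
    rw [cf_cons, mstep _ hC hCnum, div_eq_div_iff hCnum hCnum]
    push_cast; ring
  have e2 : cf (2 :: (-3) :: (blk 2 (-2) (n+1) ++ 2 :: 2 :: blk (-2) 2 (n+1))) =
      (4*(x:ℚ) - 1 - 24*(x:ℚ)^2) / (4*(x:ℚ) - 1 - 16*(x:ℚ)^2) := by
    rw [cf_cons, mstep _ e1 hD1, div_eq_div_iff hD1 (by nlinarith : (4*(x:ℚ) - 1 - 16*(x:ℚ)^2) ≠ 0)]
    push_cast; ring
  have hE := lemE (x:ℚ) hxQ _ e2 n
  have hP : (-16*(x:ℚ)^3 + 8*(x:ℚ)^2 + 4*(x:ℚ) - 1) ≠ 0 := by nlinarith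
  have hQden : (-16*(x:ℚ)^3 + 16*(x:ℚ)^2 + 4*(x:ℚ) - 1) ≠ 0 := by nlinarith
  have hE2 : cf (blk 2 (-2) n ++ (2 :: (-3) :: (blk 2 (-2) (n+1) ++ 2 :: 2 :: blk (-2) 2 (n+1)))) =
      (-16*(x:ℚ)^3 + 8*(x:ℚ)^2 + 4*(x:ℚ) - 1) / (-16*(x:ℚ)^3 + 16*(x:ℚ)^2 + 4*(x:ℚ) - 1) := by
    rw [hE, hnQ]
    ring_nf
  have hS : (32*(x:ℚ)^3 - 8*(x:ℚ)^2 - 8*(x:ℚ) + 2) ≠ 0 := by nlinarith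
  have e3 : cf ((-3) :: (blk 2 (-2) n ++ (2 :: (-3) :: (blk 2 (-2) (n+1) ++ 2 :: 2 :: blk (-2) 2 (n+1))))) =
      (32*(x:ℚ)^3 - 8*(x:ℚ)^2 - 8*(x:ℚ) + 2) / (-16*(x:ℚ)^3 + 8*(x:ℚ)^2 + 4*(x:ℚ) - 1) := by
    rw [cf_cons, mstep _ hE2 hP, div_eq_div_iff hP hP]
    push_cast; ring
  have e4 : cf ((2*x+1) :: (-3) :: (blk 2 (-2) n ++ (2 :: (-3) :: (blk 2 (-2) (n+1) ++ 2 :: 2 :: blk (-2) 2 (n+1))))) =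
      ((8*(x:ℚ)^2 - 1)^2) / (32*(x:ℚ)^3 - 8*(x:ℚ)^2 - 8*(x:ℚ) + 2) := by
    rw [cf_cons, mstep _ e3 hS, div_eq_div_iff hS hS]
    push_cast; ring
  have hT : ((8*(x:ℚ)^2 - 1)^2) ≠ 0 := pow_ne_zero 2 (by nlinarith)
  rw [cf_cons, mstep _ e4 hT, div_eq_div_iff hT hT]
  push_cast; ring
end

section
/- For every integer x ≥ 2, the continued fraction [1, (−2,2)^{x−1}, −2, 3, −2x, 2x, 2, −2x] equals (32x³ − 8x² − 8x + 2) / (8x² − 1)², where (a,b)^{k} denotes the block a, b repeated k times. -/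
lemma cf_cons_eq (a : ℤ) (l : List ℤ) (p q : ℚ) (h : cf l = p / q) (hp : p ≠ 0) :
    cf (a :: l) = ((a : ℚ) * p + q) / p := by
  rw [cf, h, inv_div]
  field_simp

lemma cf_key (x : ℤ) (hx : (2:ℚ) ≤ (x:ℚ)) : ∀ k : ℕ,
    cf (blk (-2) 2 k ++ [-2, 3, -2*x, 2*x, 2, -2*x]) =
      ((80*(x:ℚ)^3-16*(x:ℚ)^2-20*(x:ℚ)+5) + 2*k*(32*(x:ℚ)^3-8*(x:ℚ)^2-8*(x:ℚ)+2)) /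
      ((-48*(x:ℚ)^3+8*(x:ℚ)^2+12*(x:ℚ)-3) - 2*k*(32*(x:ℚ)^3-8*(x:ℚ)^2-8*(x:ℚ)+2)) := by
  have hy : 0 < (x:ℚ) := by linarith
  set y : ℚ := (x:ℚ) with hydef
  intro k
  induction k with
  | zero =>
      have e0 : cf [-2*x] = (-2*y) / 1 := by
        simp only [cf, inv_zero, add_zero, div_one, hydef]; push_cast; ring
      have e1 := cf_cons_eq 2 _ _ _ e0 (by intro h; nlinarith)
      have e2 : cf [2, -2*x] = (1-4*y) / (-2*y) := by rw [e1]; push_cast; congr 1; ring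
      have e3 := cf_cons_eq (2*x) _ _ _ e2 (by intro h; nlinarith)
      have e4 : cf [2*x, 2, -2*x] = (-8*y^2) / (1-4*y) := by
        rw [e3]; push_cast; congr 1; ring
      have e5 := cf_cons_eq (-2*x) _ _ _ e4 (by intro h; nlinarith)
      have e6 : cf [-2*x, 2*x, 2, -2*x] = (16*y^3-4*y+1) / (-8*y^2) := by
        rw [e5]; push_cast; congr 1; ring
      have e7 := cf_cons_eq 3 _ _ _ e6 (by intro h; nlinarith)
      have e8 : cf [3, -2*x, 2*x, 2, -2*x] = (48*y^3-8*y^2-12*y+3) / (16*y^3-4*y+1) := by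
        rw [e7]; push_cast; congr 1; ring
      have e9 := cf_cons_eq (-2) _ _ _ e8 (by intro h; nlinarith)
      have e10 : cf [-2, 3, -2*x, 2*x, 2, -2*x] =
          (-80*y^3+16*y^2+20*y-5) / (48*y^3-8*y^2-12*y+3) := by
        rw [e9]; push_cast; congr 1; ring
      show cf ([] ++ [-2, 3, -2*x, 2*x, 2, -2*x]) = _
      rw [List.nil_append, e10]
      push_cast
      rw [show (-80*y^3+16*y^2+20*y-5 : ℚ) = -((80*y^3-16*y^2-20*y+5) + 2*(0:ℕ)*(32*y^3-8*y^2-8*y+2)) by push_cast; ring,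
          show (48*y^3-8*y^2-12*y+3 : ℚ) = -((-48*y^3+8*y^2+12*y-3) - 2*(0:ℕ)*(32*y^3-8*y^2-8*y+2)) by push_cast; ring,
          neg_div_neg_eq]
      norm_num
  | succ k ih =>
      have hk : (0:ℚ) ≤ (k:ℚ) := Nat.cast_nonneg k
      have hP : (0:ℚ) < (80*y^3-16*y^2-20*y+5) + 2*k*(32*y^3-8*y^2-8*y+2) := by
        nlinarith [sq_nonneg (y-2), mul_nonneg hk (sq_nonneg (y-2))]
      have hPne : ((80*y^3-16*y^2-20*y+5) + 2*(k:ℚ)*(32*y^3-8*y^2-8*y+2)) ≠ 0 := ne_of_gt hP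
      have e1 := cf_cons_eq 2 _ _ _ ih hPne
      have h2PQ : (2:ℚ) * ((80*y^3-16*y^2-20*y+5) + 2*k*(32*y^3-8*y^2-8*y+2)) +
          ((-48*y^3+8*y^2+12*y-3) - 2*k*(32*y^3-8*y^2-8*y+2)) ≠ 0 := by
        have : (2:ℚ) * ((80*y^3-16*y^2-20*y+5) + 2*k*(32*y^3-8*y^2-8*y+2)) +
            ((-48*y^3+8*y^2+12*y-3) - 2*k*(32*y^3-8*y^2-8*y+2)) =
            (112*y^3-24*y^2-28*y+7) + 2*k*(32*y^3-8*y^2-8*y+2) := by ring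
        rw [this]
        have hC : (0:ℚ) < 32*y^3-8*y^2-8*y+2 := by nlinarith [sq_nonneg (y-2)]
        have h1 : (0:ℚ) < 112*y^3-24*y^2-28*y+7 := by nlinarith [sq_nonneg (y-2)]
        have h2 : (0:ℚ) ≤ 2*(k:ℚ)*(32*y^3-8*y^2-8*y+2) := by
          apply mul_nonneg (by positivity) hC.le
        positivity
      rw [show ((2:ℤ) : ℚ) = 2 by norm_num] at e1
      have e2 := cf_cons_eq (-2) _ _ _ e1 h2PQ
      show cf ((-2) :: 2 :: (blk (-2) 2 k ++ [-2, 3, -2*x, 2*x, 2, -2*x])) = _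
      rw [e2]
      rw [show ((-2:ℤ) : ℚ) * (2 * ((80*y^3-16*y^2-20*y+5) + 2*(k:ℚ)*(32*y^3-8*y^2-8*y+2)) +
            ((-48*y^3+8*y^2+12*y-3) - 2*(k:ℚ)*(32*y^3-8*y^2-8*y+2))) +
            ((80*y^3-16*y^2-20*y+5) + 2*(k:ℚ)*(32*y^3-8*y^2-8*y+2)) =
          -((80*y^3-16*y^2-20*y+5) + 2*((k:ℚ)+1)*(32*y^3-8*y^2-8*y+2)) by push_cast; ring,
        show (2:ℚ) * ((80*y^3-16*y^2-20*y+5) + 2*(k:ℚ)*(32*y^3-8*y^2-8*y+2)) +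
            ((-48*y^3+8*y^2+12*y-3) - 2*(k:ℚ)*(32*y^3-8*y^2-8*y+2)) =
          -((-48*y^3+8*y^2+12*y-3) - 2*((k:ℚ)+1)*(32*y^3-8*y^2-8*y+2)) by ring,
        neg_div_neg_eq]
      push_cast
      ring_nf

theorem boundary_slope_cf_case23 (x : ℤ) (hx : 2 ≤ x) :
    cf ([1] ++ blk (-2) 2 (x - 1).toNat ++ [-2, 3, -2*x, 2*x, 2, -2*x]) =
      (32*(x:ℚ)^3 - 8*(x:ℚ)^2 - 8*(x:ℚ) + 2) / (8*(x:ℚ)^2 - 1)^2 := by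
  have hxq : (2:ℚ) ≤ (x:ℚ) := by exact_mod_cast hx
  set y : ℚ := (x:ℚ) with hydef
  have hcast : (((x - 1).toNat : ℕ) : ℚ) = y - 1 := by
    have : ((x - 1).toNat : ℤ) = x - 1 := Int.toNat_of_nonneg (by omega)
    rw [hydef]
    exact_mod_cast congrArg (Int.cast : ℤ → ℚ) this
  have key := cf_key x hxq (x - 1).toNat
  rw [hcast] at key
  have hPeq : ((80*y^3-16*y^2-20*y+5) + 2*(y-1)*(32*y^3-8*y^2-8*y+2)) = (8*y^2-1)^2 := by
    ring
  rw [hPeq] at key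
  have hPne : ((8*y^2-1)^2 : ℚ) ≠ 0 := by
    have : (0:ℚ) < 8*y^2-1 := by nlinarith
    positivity
  have e1 := cf_cons_eq 1 _ _ _ key hPne
  show cf ((1:ℤ) :: (blk (-2) 2 (x - 1).toNat ++ [-2, 3, -2*x, 2*x, 2, -2*x])) = _
  rw [e1]
  congr 1
  push_cast
  ring
end

section
/- For every integer x ≥ 2, the continued fraction [1, (−2,2)^{x−1}, −2, 3, −2x, 2x+1, −3, (2,−2)^{x−1}] equals (32x³ − 8x² − 8x + 2) / (8x² − 1)², where (a,b)^{k} denotes the block a, b repeated k times. -/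
lemma cfstep (a p q r : ℚ) (hp : p ≠ 0) (h : a * p + q = r) :
    a + (p / q)⁻¹ = r / p := by
  rw [inv_div, add_div' _ _ _ hp, h]

lemma cf_tail : ∀ k : ℕ, cf (blk 2 (-2) (k+1)) = (2*(k:ℚ)+3)/(2*(k:ℚ)+2) := by
  intro k
  induction k with
  | zero => norm_num [blk, cf]
  | succ n ih =>
      have hn : (0:ℚ) ≤ (n:ℚ) := Nat.cast_nonneg n
      have h1 : (2*(n:ℚ)+3) ≠ 0 := by nlinarith
      have h2 : (-2*(n:ℚ)-4) ≠ 0 := by nlinarith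
      show cf (2 :: -2 :: blk 2 (-2) (n+1)) = _
      rw [cf, cf, ih]
      push_cast
      rw [cfstep (-2) (2*(n:ℚ)+3) (2*(n:ℚ)+2) (-2*(n:ℚ)-4) h1 (by ring)]
      rw [cfstep 2 (-2*(n:ℚ)-4) (2*(n:ℚ)+3) (-2*(n:ℚ)-5) h2 (by ring)]
      rw [div_eq_div_iff h2 (by nlinarith)]
      ring

lemma cf_head (w : ℚ) (hw : w < 0) (L : List ℤ) (hL : cf L = w - 1) :
    ∀ k : ℕ, cf (blk (-2) 2 k ++ L) = ((2*(k:ℚ)+1)*w - 1)/(1 - 2*(k:ℚ)*w) := by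
  intro k
  induction k with
  | zero => simp [blk, hL]
  | succ n ih =>
      have hn : (0:ℚ) ≤ (n:ℚ) := Nat.cast_nonneg n
      have h1 : (2*(n:ℚ)+1)*w - 1 ≠ 0 := by nlinarith
      have h3 : (2*(n:ℚ)+2)*w - 1 ≠ 0 := by nlinarith
      have h4 : (1 - 2*((n:ℚ)+1)*w) ≠ 0 := by nlinarith
      show cf ((-2) :: 2 :: (blk (-2) 2 n ++ L)) = _
      rw [cf, cf, ih]
      push_cast
      rw [cfstep 2 ((2*(n:ℚ)+1)*w - 1) (1 - 2*(n:ℚ)*w) ((2*(n:ℚ)+2)*w - 1) h1 (by ring)]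
      rw [cfstep (-2) ((2*(n:ℚ)+2)*w - 1) ((2*(n:ℚ)+1)*w - 1) (1 - (2*(n:ℚ)+3)*w) h3 (by ring)]
      rw [div_eq_div_iff h3 h4]
      ring

theorem boundary_slope_cf_case25 (x : ℤ) (hx : 2 ≤ x) :
    cf ([1] ++ blk (-2) 2 (x - 1).toNat ++ [-2, 3, -2*x, 2*x + 1, -3]
        ++ blk 2 (-2) (x - 1).toNat) =
      (32*(x:ℚ)^3 - 8*(x:ℚ)^2 - 8*(x:ℚ) + 2) / (8*(x:ℚ)^2 - 1)^2 := by
  have hx2 : (2:ℚ) ≤ (x:ℚ) := by exact_mod_cast hx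
  set X : ℚ := (x:ℚ) with hX
  obtain ⟨m, hm⟩ : ∃ m : ℕ, (x - 1).toNat = m + 1 := ⟨(x-2).toNat, by omega⟩
  have hmz : (m:ℤ) = x - 2 := by omega
  have hmq : (m:ℚ) = X - 2 := by rw [hX]; exact_mod_cast hmz
  rw [hm]
  -- tail value
  have htail : cf (blk 2 (-2) (m+1)) = (2*X - 1)/(2*X - 2) := by
    rw [cf_tail, hmq]
    ring_nf
  -- middle value
  set Q : ℚ := 48*X^3 - 8*X^2 - 12*X + 3 with hQdef
  set P : ℚ := -80*X^3 + 16*X^2 + 20*X - 5 with hPdef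
  have hQpos : 0 < Q := by rw [hQdef]; nlinarith
  have hmid : cf ([-2, 3, -2*x, 2*x + 1, -3] ++ blk 2 (-2) (m+1)) = P / Q := by
    show cf ((-2) :: 3 :: (-2*x) :: (2*x+1) :: (-3) :: blk 2 (-2) (m+1)) = P / Q
    rw [cf, cf, cf, cf, cf, htail]
    push_cast
    rw [← hX]
    rw [cfstep (-3) (2*X-1) (2*X-2) (1-4*X) (by nlinarith) (by ring)]
    rw [cfstep (2*X+1) (1-4*X) (2*X-1) (-8*X^2) (by nlinarith) (by ring)]
    rw [cfstep (-2*X) (-8*X^2) (1-4*X) (16*X^3-4*X+1) (by nlinarith) (by ring)]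
    rw [cfstep 3 (16*X^3-4*X+1) (-8*X^2) Q (by nlinarith) (by rw [hQdef]; ring)]
    rw [cfstep (-2) Q (16*X^3-4*X+1) P (ne_of_gt hQpos) (by rw [hQdef, hPdef]; ring)]
  -- head
  set w : ℚ := P/Q + 1 with hwdef
  have hw2 : w = (P + Q)/Q := by rw [hwdef]; field_simp
  have hPQ : P + Q < 0 := by rw [hPdef, hQdef]; nlinarith
  have hw : w < 0 := hw2 ▸ div_neg_of_neg_of_pos hPQ hQpos
  have hL : cf ([-2, 3, -2*x, 2*x + 1, -3] ++ blk 2 (-2) (m+1)) = w - 1 := by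
    rw [hmid, hwdef]; ring
  have hhead := cf_head w hw _ hL (m+1)
  have hcast : ((m+1 : ℕ) : ℚ) = X - 1 := by push_cast [hmq]; ring
  rw [hcast] at hhead
  -- assemble
  have hlist : ([1] ++ blk (-2) 2 (m+1) ++ [-2, 3, -2*x, 2*x + 1, -3]
        ++ blk 2 (-2) (m+1))
      = 1 :: (blk (-2) 2 (m+1) ++ ([-2, 3, -2*x, 2*x + 1, -3]
        ++ blk 2 (-2) (m+1))) := by
    simp
  rw [hlist, cf, hhead]
  have hN : (2*(X-1)+1)*w - 1 < 0 := by nlinarith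
  have hN' : (2*(X-1)+1)*w - 1 ≠ 0 := ne_of_lt hN
  push_cast
  rw [cfstep 1 ((2*(X-1)+1)*w - 1) (1 - 2*(X-1)*w) w hN' (by ring)]
  have h81 : (0:ℚ) < 8*X^2 - 1 := by nlinarith
  rw [div_eq_div_iff hN' (pow_ne_zero 2 (ne_of_gt h81))]
  have hQ0 : (48*X^3 - 8*X^2 - 12*X + 3 : ℚ) ≠ 0 := by rw [← hQdef]; exact ne_of_gt hQpos
  rw [hw2, hPdef, hQdef]
  have hQ1 : (3 - X * 12 - X ^ 2 * 8 + X ^ 3 * 48 : ℚ) ≠ 0 := by intro h; apply hQ0; linear_combination h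
  field_simp
  ring_nf
  field_simp
  ring
end
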